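/- Let D := {f ∈ Δ_{2,max} : lim_{x→±1}(1−x²)f′(x) = 0 and lim_{x→±1}((1−x²)²f″(x))′ = 0} and D(S) := {f ∈ Δ_{2,max} : lim_{x→±1}[f,1]₂(x) = 0 and lim_{x→±1}[f,x]₂(x) = 0}. Then D = D(S). -/

import Mathlib

open MeasureTheory Set Filter

noncomputable section

/-- `f` is locally absolutely continuous on `(-1,1)` with a.e. derivative `f'`,
expressed via the fundamental theorem of calculus. -/
def LocACOn (f f' : ℝ → ℂ) : Prop :=
  ∀ x ∈ Ioo (-1:ℝ) 1, ∀ y ∈ Ioo (-1:ℝ) 1,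
    IntervalIntegrable f' volume x y ∧ f y - f x = ∫ t in x..y, f' t

/-- membership in `L²(-1,1)` -/
def L2I (g : ℝ → ℂ) : Prop :=
  MemLp g 2 (volume.restrict (Ioo (-1:ℝ) 1))

/-- the Legendre expression `ℓ[f] = -((1-x²)f′)′ = -(1-x²)f″ + 2x f′`. -/
def leg (f1 f2 : ℝ → ℂ) (x : ℝ) : ℂ :=
  ((2*x : ℝ) : ℂ) * f1 x - ((1 - x^2 : ℝ) : ℂ) * f2 x

/-- the derivative `(ℓ[f])′ = 2f′ + 4x f″ - (1-x²)f‴`. -/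
def legD (f1 f2 f3 : ℝ → ℂ) (x : ℝ) : ℂ :=
  (2 : ℂ) * f1 x + ((4*x : ℝ) : ℂ) * f2 x - ((1 - x^2 : ℝ) : ℂ) * f3 x

/-- the second derivative `(ℓ[f])″ = 6f″ + 6x f‴ - (1-x²)f⁗`. -/
def legDD (f2 f3 f4 : ℝ → ℂ) (x : ℝ) : ℂ :=
  (6 : ℂ) * f2 x + ((6*x : ℝ) : ℂ) * f3 x - ((1 - x^2 : ℝ) : ℂ) * f4 x

/-- `ℓ²[f] = ((1-x²)²f″)″ - 2((1-x²)f′)′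
           = (1-x²)²f⁗ - 8x(1-x²)f‴ + (14x²-6)f″ + 4x f′`. -/
def legSq (f1 f2 f3 f4 : ℝ → ℂ) (x : ℝ) : ℂ :=
  (((1 - x^2)^2 : ℝ) : ℂ) * f4 x - ((8*x*(1 - x^2) : ℝ) : ℂ) * f3 x
    + ((14*x^2 - 6 : ℝ) : ℂ) * f2 x + ((4*x : ℝ) : ℂ) * f1 x

/-- `((1-x²)²f″)′ = (1-x²)²f‴ - 4x(1-x²)f″`. -/
def sqTermD (f2 f3 : ℝ → ℂ) (x : ℝ) : ℂ :=
  (((1 - x^2)^2 : ℝ) : ℂ) * f3 x - ((4*x*(1 - x^2) : ℝ) : ℂ) * f2 x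

/-- `[f,1]₂(x) = ((1-x²)²f″)′ - 2(1-x²)f′`. -/
def bket1 (f1 f2 f3 : ℝ → ℂ) (x : ℝ) : ℂ :=
  sqTermD f2 f3 x - ((2*(1 - x^2) : ℝ) : ℂ) * f1 x

/-- `[f,x]₂(x) = x[f,1]₂(x) - (1-x²)²f″ + 2(1-x²)f`. -/
def bketX (f f1 f2 f3 : ℝ → ℂ) (x : ℝ) : ℂ :=
  (x : ℂ) * bket1 f1 f2 f3 x - (((1 - x^2)^2 : ℝ) : ℂ) * f2 x
    + ((2*(1 - x^2) : ℝ) : ℂ) * f x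

/-- the maximal domain `Δ_{2,max}` of `ℓ²` in `L²(-1,1)`:
`f, f′, f″, f‴` locally absolutely continuous and `f, ℓ²[f] ∈ L²(-1,1)`. -/
def Delta2Max (f f1 f2 f3 f4 : ℝ → ℂ) : Prop :=
  LocACOn f f1 ∧ LocACOn f1 f2 ∧ LocACOn f2 f3 ∧ LocACOn f3 f4 ∧
    L2I f ∧ L2I (legSq f1 f2 f3 f4)

/-- the filter `x → 1⁻` from within `(-1,1)`. -/
def atOne : Filter ℝ := nhdsWithin 1 (Ioo (-1:ℝ) 1)

/-- the filter `x → -1⁺` from within `(-1,1)`. -/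
def atNegOne : Filter ℝ := nhdsWithin (-1) (Ioo (-1:ℝ) 1)

/-- the GKN domain `D(S)`. -/
def DS (f f1 f2 f3 f4 : ℝ → ℂ) : Prop :=
  Delta2Max f f1 f2 f3 f4 ∧
  Tendsto (bket1 f1 f2 f3) atOne (nhds 0) ∧
  Tendsto (bket1 f1 f2 f3) atNegOne (nhds 0) ∧
  Tendsto (bketX f f1 f2 f3) atOne (nhds 0) ∧
  Tendsto (bketX f f1 f2 f3) atNegOne (nhds 0)

/-- the maximal domain `Δ_{1,max}` of `ℓ` in `L²(-1,1)`. -/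
def Delta1Max (f f1 f2 : ℝ → ℂ) : Prop :=
  LocACOn f f1 ∧ LocACOn f1 f2 ∧ L2I f ∧ L2I (leg f1 f2)

/-- the domain `D(A)` of the Legendre polynomials operator. -/
def DA (f f1 f2 : ℝ → ℂ) : Prop :=
  Delta1Max f f1 f2 ∧
  Tendsto (fun x => ((1 - x^2 : ℝ) : ℂ) * f1 x) atOne (nhds 0) ∧
  Tendsto (fun x => ((1 - x^2 : ℝ) : ℂ) * f1 x) atNegOne (nhds 0)

/-- the algebraic domain `D(A²) = {f ∈ D(A) : ℓ[f] ∈ D(A)}`. -/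
def DA2 (f f1 f2 f3 f4 : ℝ → ℂ) : Prop :=
  DA f f1 f2 ∧ DA (leg f1 f2) (legD f1 f2 f3) (legDD f2 f3 f4)

/-- the GKN-like domain `D`: `f ∈ Δ_{2,max}` with the non-GKN boundary conditions
`lim_{x→±1} (1-x²)f′(x) = 0` and `lim_{x→±1} ((1-x²)²f″(x))′ = 0`. -/
def DDom (f f1 f2 f3 f4 : ℝ → ℂ) : Prop :=
  Delta2Max f f1 f2 f3 f4 ∧
  Tendsto (fun x => ((1 - x^2 : ℝ) : ℂ) * f1 x) atOne (nhds 0) ∧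
  Tendsto (fun x => ((1 - x^2 : ℝ) : ℂ) * f1 x) atNegOne (nhds 0) ∧
  Tendsto (sqTermD f2 f3) atOne (nhds 0) ∧
  Tendsto (sqTermD f2 f3) atNegOne (nhds 0)

/-!
Write `p = 1 - x²`. Near `x = 1` everything rests on one estimate: if
`‖g′ t‖ ≤ a t / (1 - t) + η t / (1 - t)²` with `a ∈ L²` and `η → 0`, then `(1 - t) g t → 0`.
Indeed AM–GM bounds `a / (1 - t)` by `a² / δ + δ / (1 - t)²`, and the comparison principle
integrates this to `‖g x‖ ≤ C + ‖a‖₂² / δ + 2δ / (1 - x)`.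

`D ⊆ D(S)`: the estimate for `g = f` gives `p f → 0`, and for `g = x f′ - p f″ / 2`, whose
derivative is `f′ - ((p² f″)′) / (2p)`, it gives `p g → 0`, hence `p² f″ = 2x (p f′) - 2 p g → 0`.
`D(S) ⊆ D`: `[f,x]₂ - x [f,1]₂ = 2p f - p² f″ → 0`, so `‖f″‖ ≤ 2‖f‖ / p + o(1) / p²`, and the
estimate for `g = f′` gives `p f′ → 0`. In both directions the remaining limits are linear
combinations of these. The endpoint `-1` is reduced to `1` by the reflection `x ↦ -x`.
-/

open scoped Topology

theorem tendsto_nhdsLT_one_zero_of_norm_le {E : Type*} [SeminormedAddGroup E] {r : ℝ → E}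
    (h : ∀ ε > 0, ∃ C, ∀ᶠ x in 𝓝[<] (1 : ℝ), ‖r x‖ ≤ (1 - x) * C + ε) :
    Tendsto r (𝓝[<] 1) (𝓝 0) := by
  refine NormedAddGroup.tendsto_nhds_zero.2 fun ε hε => ?_
  obtain ⟨C, hC⟩ := h (ε / 2) (half_pos hε)
  have hlim : Tendsto (fun x : ℝ => (1 - x) * C) (𝓝[<] 1) (𝓝 0) := by
    have : Tendsto (fun x : ℝ => (1 - x) * C) (𝓝 1) (𝓝 ((1 - 1) * C)) :=
      ((continuous_const.sub continuous_id).mul continuous_const).tendsto 1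
    simpa using this.mono_left nhdsWithin_le_nhds
  filter_upwards [hC, hlim.eventually (gt_mem_nhds (half_pos hε))] with x hx hxC
  linarith

section Comparison

variable {E : Type*} [NormedAddCommGroup E] [NormedSpace ℝ E]

theorem norm_sub_le_sub_of_norm_deriv_le {g φ : ℝ → E} {Ψ ψ : ℝ → ℝ} {a b : ℝ} (hab : a ≤ b)
    (hg : ∀ t ∈ Icc a b, HasDerivAt g (φ t) t) (hΨ : ∀ t ∈ Icc a b, HasDerivAt Ψ (ψ t) t)
    (hφ : ∀ t ∈ Ico a b, ‖φ t‖ ≤ ψ t) : ‖g b - g a‖ ≤ Ψ b - Ψ a :=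
  image_norm_le_of_norm_deriv_right_le_deriv_boundary' (f := fun t => g t - g a)
    (B := fun t => Ψ t - Ψ a)
    (fun t ht => ((hg t ht).continuousAt.sub continuousAt_const).continuousWithinAt)
    (fun t ht => ((hg t (Ico_subset_Icc_self ht)).sub_const (g a)).hasDerivWithinAt)
    (by simp) (fun t ht => ((hΨ t ht).continuousAt.sub continuousAt_const).continuousWithinAt)
    (fun t ht => ((hΨ t (Ico_subset_Icc_self ht)).sub_const (Ψ a)).hasDerivWithinAt) hφ
    ⟨hab, le_rfl⟩

theorem hasDerivAt_integral_sq {a : ℝ → ℝ} {c b t : ℝ} (ha : ContinuousOn a (Ioo c 1))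
    (hb : b ∈ Ioo c 1) (ht : t ∈ Ioo c 1) :
    HasDerivAt (fun x => ∫ s in b..x, a s ^ 2) (a t ^ 2) t := by
  have ha2 : ContinuousOn (fun s => a s ^ 2) (Ioo c 1) := ha.pow 2
  refine intervalIntegral.integral_hasDerivAt_right ?_
    (ha2.stronglyMeasurableAtFilter isOpen_Ioo t ht) (ha2.continuousAt (isOpen_Ioo.mem_nhds ht))
  exact (ha2.mono (ordConnected_Ioo.uIcc_subset hb ht)).intervalIntegrable

theorem norm_sub_le_of_norm_deriv_le_div {g φ : ℝ → E} {a : ℝ → ℝ} {c b x δ : ℝ}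
    (hcb : c < b) (hbx : b ≤ x) (hx : x < 1) (hδ : 0 < δ)
    (hg : ∀ t ∈ Ioo c 1, HasDerivAt g (φ t) t) (ha : ContinuousOn a (Ioo c 1))
    (ha2 : IntegrableOn (fun t => a t ^ 2) (Ioo c 1))
    (hφ : ∀ t ∈ Ico b x, ‖φ t‖ ≤ a t / (1 - t) + δ / (1 - t) ^ 2) :
    ‖g x - g b‖ ≤ (∫ t in Ioo c 1, a t ^ 2) / δ + 2 * δ / (1 - x) := by
  have hsub : Icc b x ⊆ Ioo c 1 := fun t ht => ⟨hcb.trans_le ht.1, ht.2.trans_lt hx⟩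
  have hb : b ∈ Ioo c 1 := hsub ⟨le_rfl, hbx⟩
  have hΨ : ∀ t ∈ Icc b x, HasDerivAt (fun s => (∫ r in b..s, a r ^ 2) / δ + 2 * δ * (1 - s)⁻¹)
      (a t ^ 2 / δ + 2 * δ / (1 - t) ^ 2) t := by
    intro t ht
    have h1t : (1 - t) ≠ 0 := by linarith [(hsub ht).2]
    have h1 : HasDerivAt (fun s : ℝ => 1 - s) (-1) t := by
      simpa using (hasDerivAt_id t).const_sub 1
    refine (((hasDerivAt_integral_sq ha hb (hsub ht)).div_const δ).add
      ((h1.inv h1t).const_mul (2 * δ))).congr_deriv ?_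
    ring
  have hbound : ∀ t ∈ Ico b x, ‖φ t‖ ≤ a t ^ 2 / δ + 2 * δ / (1 - t) ^ 2 := by
    intro t ht
    have h1t : 0 < 1 - t := by linarith [ht.2]
    have hamgm : a t / (1 - t) ≤ a t ^ 2 / δ + δ / (1 - t) ^ 2 := by
      rw [div_add_div _ _ hδ.ne' (by positivity), le_div_iff₀ (by positivity)]
      have : a t / (1 - t) * (δ * (1 - t) ^ 2) = a t * δ * (1 - t) := by field_simp
      rw [this]
      nlinarith [sq_nonneg (2 * a t * (1 - t) - δ), sq_nonneg δ]
    have : 2 * δ / (1 - t) ^ 2 = δ / (1 - t) ^ 2 + δ / (1 - t) ^ 2 := by ring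
    linarith [hφ t ht]
  have hF : ∫ t in b..x, a t ^ 2 ≤ ∫ t in Ioo c 1, a t ^ 2 := by
    rw [intervalIntegral.integral_of_le hbx]
    exact setIntegral_mono_set ha2 (ae_of_all _ fun t => sq_nonneg _)
      (Ioc_subset_Icc_self.trans hsub).eventuallyLE
  have h1b : 0 < 1 - b := by linarith
  calc ‖g x - g b‖
      ≤ ((∫ r in b..x, a r ^ 2) / δ + 2 * δ * (1 - x)⁻¹)
        - ((∫ r in b..b, a r ^ 2) / δ + 2 * δ * (1 - b)⁻¹) :=
        norm_sub_le_sub_of_norm_deriv_le hbx (fun t ht => hg t (hsub ht)) hΨ hbound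
    _ ≤ (∫ t in Ioo c 1, a t ^ 2) / δ + 2 * δ / (1 - x) := by
        rw [intervalIntegral.integral_same, zero_div, zero_add, ← div_eq_mul_inv,
          ← div_eq_mul_inv]
        have : 0 ≤ 2 * δ / (1 - b) := by positivity
        have := div_le_div_of_nonneg_right hF hδ.le
        linarith

theorem tendsto_one_sub_smul_of_norm_deriv_le {g φ : ℝ → E} {a η : ℝ → ℝ} {c : ℝ} (hc : c < 1)
    (hg : ∀ t ∈ Ioo c 1, HasDerivAt g (φ t) t) (ha : ContinuousOn a (Ioo c 1))
    (ha2 : IntegrableOn (fun t => a t ^ 2) (Ioo c 1)) (hη : Tendsto η (𝓝[<] 1) (𝓝 0))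
    (hφ : ∀ t ∈ Ioo c 1, ‖φ t‖ ≤ a t / (1 - t) + η t / (1 - t) ^ 2) :
    Tendsto (fun t => (1 - t) • g t) (𝓝[<] 1) (𝓝 0) := by
  refine tendsto_nhdsLT_one_zero_of_norm_le fun ε hε => ?_
  have hδ : 0 < ε / 2 := half_pos hε
  obtain ⟨l, hl1, hl⟩ := mem_nhdsLT_iff_exists_Ioo_subset.1
    (hη.eventually (eventually_le_nhds hδ))
  obtain ⟨b, hb, hb1⟩ := exists_between (max_lt hl1 hc)
  have hcb : c < b := (le_max_right l c).trans_lt hb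
  have hlb : l < b := (le_max_left l c).trans_lt hb
  refine ⟨‖g b‖ + (∫ t in Ioo c 1, a t ^ 2) / (ε / 2), ?_⟩
  filter_upwards [Ioo_mem_nhdsLT hb1] with x hx
  have h1x : 0 < 1 - x := by linarith [hx.2]
  have hφ' : ∀ t ∈ Ico b x, ‖φ t‖ ≤ a t / (1 - t) + (ε / 2) / (1 - t) ^ 2 := by
    intro t ht
    have h1t : 0 < 1 - t := by linarith [ht.2, hx.2]
    have hηt : η t ≤ ε / 2 := hl ⟨hlb.trans_le ht.1, ht.2.trans hx.2⟩
    have := div_le_div_of_nonneg_right hηt (sq_nonneg (1 - t))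
    linarith [hφ t ⟨hcb.trans_le ht.1, ht.2.trans hx.2⟩]
  have hgx := norm_sub_le_of_norm_deriv_le_div hcb hx.1.le hx.2 hδ hg ha ha2 hφ'
  have hnorm : ‖g x‖ ≤ ‖g b‖ + ‖g x - g b‖ := by
    simpa using norm_add_le (g b) (g x - g b)
  rw [norm_smul, Real.norm_of_nonneg h1x.le]
  calc (1 - x) * ‖g x‖
      ≤ (1 - x) * (‖g b‖ + ((∫ t in Ioo c 1, a t ^ 2) / (ε / 2) + 2 * (ε / 2) / (1 - x))) :=
        mul_le_mul_of_nonneg_left (hnorm.trans (by gcongr)) h1x.le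
    _ = (1 - x) * (‖g b‖ + (∫ t in Ioo c 1, a t ^ 2) / (ε / 2)) + ε := by
        field_simp
        ring

theorem tendsto_one_sub_smul_of_tendsto_one_sub_smul_deriv {g φ : ℝ → E} {c : ℝ} (hc : c < 1)
    (hg : ∀ t ∈ Ioo c 1, HasDerivAt g (φ t) t)
    (hφ : Tendsto (fun t => (1 - t) • φ t) (𝓝[<] 1) (𝓝 0)) :
    Tendsto (fun t => (1 - t) • g t) (𝓝[<] 1) (𝓝 0) := by
  refine tendsto_one_sub_smul_of_norm_deriv_le (a := 0) (max_lt hc one_pos)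
    (fun t ht => hg t ⟨(le_max_left c 0).trans_lt ht.1, ht.2⟩) continuousOn_const
    (by simp) (by simpa using hφ.norm) fun t ht => ?_
  have h0t : 0 < t := (le_max_right c 0).trans_lt ht.1
  have h1t : 0 < 1 - t := by linarith [ht.2]
  rw [Pi.zero_apply, zero_div, zero_add, norm_smul, Real.norm_of_nonneg h1t.le, sq,
    mul_div_mul_left _ _ h1t.ne', le_div_iff₀ h1t]
  nlinarith [norm_nonneg (φ t)]

end Comparison

section Legendre

def DBoundaryCond (f1 f2 f3 : ℝ → ℂ) (l : Filter ℝ) : Prop :=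
  Tendsto (fun x => ((1 - x^2 : ℝ) : ℂ) * f1 x) l (𝓝 0) ∧ Tendsto (sqTermD f2 f3) l (𝓝 0)

def DSBoundaryCond (f f1 f2 f3 : ℝ → ℂ) (l : Filter ℝ) : Prop :=
  Tendsto (bket1 f1 f2 f3) l (𝓝 0) ∧ Tendsto (bketX f f1 f2 f3) l (𝓝 0)

theorem tendsto_one_sub_sq_mul_iff {g : ℝ → ℂ} :
    Tendsto (fun x => ((1 - x^2 : ℝ) : ℂ) * g x) (𝓝[<] 1) (𝓝 0) ↔
      Tendsto (fun x => (1 - x) • g x) (𝓝[<] 1) (𝓝 0) := by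
  have hadd : Tendsto (fun x : ℝ => 1 + x) (𝓝[<] 1) (𝓝 2) := by
    have : Tendsto (fun x : ℝ => 1 + x) (𝓝 1) (𝓝 (1 + 1)) :=
      (continuous_const.add continuous_id).tendsto 1
    exact (this.mono_left nhdsWithin_le_nhds).trans (by norm_num)
  have hfactor : ∀ x : ℝ, ((1 - x^2 : ℝ) : ℂ) * g x = (1 + x) • ((1 - x) • g x) := by
    intro x
    rw [smul_smul, Complex.real_smul]
    ring_nf
  simp_rw [hfactor]
  constructor
  · intro h
    have := (hadd.inv₀ two_ne_zero).smul h
    rw [smul_zero] at this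
    refine this.congr' ?_
    filter_upwards [Ioo_mem_nhdsLT (show (-1 : ℝ) < 1 by norm_num)] with x hx
    rw [smul_smul, inv_mul_cancel₀ (by linarith [hx.1]), one_smul]
  · intro h
    simpa using hadd.smul h

theorem tendsto_nhdsLT_one_ofReal : Tendsto (fun x : ℝ => (x : ℂ)) (𝓝[<] 1) (𝓝 1) := by
  simpa using (Complex.continuous_ofReal.tendsto 1).mono_left nhdsWithin_le_nhds

theorem tendsto_one_sub_sq_sq_mul_of_dBoundaryCond {f1 f2 f3 : ℝ → ℂ}
    (hf1 : ∀ t ∈ Ioo 0 1, HasDerivAt f1 (f2 t) t) (hf2 : ∀ t ∈ Ioo 0 1, HasDerivAt f2 (f3 t) t)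
    (h : DBoundaryCond f1 f2 f3 (𝓝[<] 1)) :
    Tendsto (fun x => (((1 - x^2)^2 : ℝ) : ℂ) * f2 x) (𝓝[<] 1) (𝓝 0) := by
  set G : ℝ → ℂ := fun t => (t : ℂ) * f1 t - ((1 - t^2 : ℝ) : ℂ) / 2 * f2 t
  set G' : ℝ → ℂ := fun t => f1 t + 2 * t * f2 t - ((1 - t^2 : ℝ) : ℂ) / 2 * f3 t
  have hG : ∀ t ∈ Ioo 0 1, HasDerivAt G (G' t) t := by
    intro t ht
    have hp : HasDerivAt (fun s : ℝ => ((1 - s^2 : ℝ) : ℂ)) (((-(2 * t) : ℝ)) : ℂ) t := by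
      simpa using ((hasDerivAt_pow 2 t).const_sub 1).ofReal_comp
    have := (((hasDerivAt_id t).ofReal_comp).mul (hf1 t ht)).sub
      ((hp.div_const 2).mul (hf2 t ht))
    refine this.congr_deriv ?_
    simp only [G', id]
    push_cast
    ring
  have hG' : Tendsto (fun t => (1 - t) • G' t) (𝓝[<] 1) (𝓝 0) := by
    have h2 : Tendsto (fun t : ℝ => (2 * (1 + (t : ℂ)))⁻¹) (𝓝[<] 1) (𝓝 (2 * (1 + 1))⁻¹) :=
      ((tendsto_nhdsLT_one_ofReal.const_add 1).const_mul 2).inv₀ (by norm_num)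
    have := (tendsto_one_sub_sq_mul_iff.1 h.1).sub (h2.mul h.2)
    rw [mul_zero, sub_zero] at this
    refine this.congr' ?_
    filter_upwards [Ioo_mem_nhdsLT (show (-1 : ℝ) < 1 by norm_num)] with t ht
    have h1 : (1 + (t : ℂ)) ≠ 0 := by exact_mod_cast (show 1 + t ≠ 0 by linarith [ht.1])
    simp only [G', sqTermD, Complex.real_smul]
    push_cast
    field_simp
    ring
  have hpG := tendsto_one_sub_sq_mul_iff.2
    (tendsto_one_sub_smul_of_tendsto_one_sub_smul_deriv one_pos hG hG')
  have := ((tendsto_nhdsLT_one_ofReal.mul h.1).const_mul 2).sub (hpG.const_mul 2)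
  rw [mul_zero, mul_zero, sub_zero] at this
  refine this.congr fun t => ?_
  simp only [G]
  push_cast
  ring

theorem norm_le_of_eq_sub_one_sub_sq_mul {t : ℝ} (ht : t ∈ Ioo 0 1) {z w r : ℂ}
    (hr : r = ((2 * (1 - t^2) : ℝ) : ℂ) * z - (((1 - t^2)^2 : ℝ) : ℂ) * w) :
    ‖w‖ ≤ 2 * ‖z‖ / (1 - t) + ‖r‖ / (1 - t) ^ 2 := by
  have h1t : 0 < 1 - t := by linarith [ht.2]
  have hp : 1 - t ≤ 1 - t^2 := by nlinarith [ht.1, ht.2]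
  have hp2 : 0 < 1 - t^2 := h1t.trans_le hp
  have hw : (((1 - t^2)^2 : ℝ) : ℂ) * w = ((2 * (1 - t^2) : ℝ) : ℂ) * z - r := by
    rw [hr]; ring
  have hnorm : (1 - t^2)^2 * ‖w‖ ≤ 2 * (1 - t^2) * ‖z‖ + ‖r‖ := by
    have := congrArg norm hw
    rw [norm_mul, Complex.norm_real, Real.norm_of_nonneg (by positivity)] at this
    rw [this]
    refine (norm_sub_le _ _).trans (le_of_eq ?_)
    rw [norm_mul, Complex.norm_real, Real.norm_of_nonneg (by linarith)]
  calc ‖w‖ ≤ (2 * (1 - t^2) * ‖z‖ + ‖r‖) / (1 - t^2)^2 := by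
        rw [le_div_iff₀ (pow_pos hp2 2)]; linarith
    _ = 2 * ‖z‖ / (1 - t^2) + ‖r‖ / (1 - t^2)^2 := by
        field_simp
    _ ≤ 2 * ‖z‖ / (1 - t) + ‖r‖ / (1 - t) ^ 2 := by gcongr

theorem tendsto_one_sub_sq_mul_of_dsBoundaryCond {f f1 f2 f3 : ℝ → ℂ}
    (hf : ∀ t ∈ Ioo 0 1, HasDerivAt f (f1 t) t) (hf1 : ∀ t ∈ Ioo 0 1, HasDerivAt f1 (f2 t) t)
    (hL2 : IntegrableOn (fun t => ‖f t‖ ^ 2) (Ioo 0 1)) (h : DSBoundaryCond f f1 f2 f3 (𝓝[<] 1)) :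
    Tendsto (fun x => ((1 - x^2 : ℝ) : ℂ) * f1 x) (𝓝[<] 1) (𝓝 0) := by
  set r : ℝ → ℂ := fun t => ((2 * (1 - t^2) : ℝ) : ℂ) * f t - (((1 - t^2)^2 : ℝ) : ℂ) * f2 t
  have hr : Tendsto r (𝓝[<] 1) (𝓝 0) := by
    have := h.2.sub (tendsto_nhdsLT_one_ofReal.mul h.1)
    rw [mul_zero, sub_zero] at this
    refine this.congr fun t => ?_
    simp only [r, bketX]
    ring
  have hfc : ContinuousOn f (Ioo 0 1) := fun t ht => (hf t ht).continuousAt.continuousWithinAt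
  refine tendsto_one_sub_sq_mul_iff.2 (tendsto_one_sub_smul_of_norm_deriv_le one_pos hf1
    (a := fun t => 2 * ‖f t‖) (η := fun t => ‖r t‖) (continuousOn_const.mul hfc.norm) ?_
    (by simpa only [norm_zero] using hr.norm)
    fun t ht => norm_le_of_eq_sub_one_sub_sq_mul ht rfl)
  simp only [mul_pow, show (2 : ℝ) ^ 2 = 4 by norm_num]
  exact hL2.const_mul 4

theorem dBoundaryCond_iff_dsBoundaryCond_nhdsLT_one {f f1 f2 f3 : ℝ → ℂ}
    (hf : ∀ t ∈ Ioo 0 1, HasDerivAt f (f1 t) t) (hf1 : ∀ t ∈ Ioo 0 1, HasDerivAt f1 (f2 t) t)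
    (hf2 : ∀ t ∈ Ioo 0 1, HasDerivAt f2 (f3 t) t)
    (hL2 : IntegrableOn (fun t => ‖f t‖ ^ 2) (Ioo 0 1)) :
    DBoundaryCond f1 f2 f3 (𝓝[<] 1) ↔ DSBoundaryCond f f1 f2 f3 (𝓝[<] 1) := by
  constructor
  · intro h
    have hw := tendsto_one_sub_sq_mul_iff.2 (tendsto_one_sub_smul_of_tendsto_one_sub_smul_deriv
      one_pos hf (tendsto_one_sub_sq_mul_iff.1 h.1))
    have hu := tendsto_one_sub_sq_sq_mul_of_dBoundaryCond hf1 hf2 h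
    have hb1 : Tendsto (bket1 f1 f2 f3) (𝓝[<] 1) (𝓝 0) := by
      have := h.2.sub (h.1.const_mul 2)
      rw [mul_zero, sub_zero] at this
      refine this.congr fun t => ?_
      simp only [bket1]
      push_cast
      ring
    refine ⟨hb1, ?_⟩
    have := ((tendsto_nhdsLT_one_ofReal.mul hb1).sub hu).add (hw.const_mul 2)
    rw [mul_zero, mul_zero, sub_zero, add_zero] at this
    refine this.congr fun t => ?_
    simp only [bketX]
    push_cast
    ring
  · intro h
    have hv := tendsto_one_sub_sq_mul_of_dsBoundaryCond hf hf1 hL2 h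
    refine ⟨hv, ?_⟩
    have := h.1.add (hv.const_mul 2)
    rw [mul_zero, add_zero] at this
    refine this.congr fun t => ?_
    simp only [bket1]
    push_cast
    ring

end Legendre

section Reflection

theorem tendsto_nhdsGT_neg_one_zero_iff {E : Type*} [SeminormedAddGroup E] {F G : ℝ → E}
    (h : ∀ x, ‖G x‖ = ‖F (-x)‖) :
    Tendsto F (𝓝[>] (-1)) (𝓝 0) ↔ Tendsto G (𝓝[<] 1) (𝓝 0) := by
  rw [tendsto_zero_iff_norm_tendsto_zero, tendsto_zero_iff_norm_tendsto_zero (f := G), funext h]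
  have hneg : Tendsto Neg.neg (𝓝[>] (-1 : ℝ)) (𝓝[<] 1) := by
    simpa using tendsto_neg_nhdsGT (a := (-1 : ℝ))
  exact ⟨fun hF => hF.comp tendsto_neg_nhdsLT, fun hG => by
    simpa [Function.comp_def] using hG.comp hneg⟩

theorem dBoundaryCond_nhdsGT_neg_one_iff {f1 f2 f3 : ℝ → ℂ} :
    DBoundaryCond f1 f2 f3 (𝓝[>] (-1)) ↔
      DBoundaryCond (fun x => -f1 (-x)) (fun x => f2 (-x)) (fun x => -f3 (-x)) (𝓝[<] 1) := by
  refine and_congr (tendsto_nhdsGT_neg_one_zero_iff fun x => ?_)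
    (tendsto_nhdsGT_neg_one_zero_iff fun x => ?_) <;>
  · rw [← norm_neg]
    congr 1
    simp only [sqTermD]
    push_cast
    ring

theorem dsBoundaryCond_nhdsGT_neg_one_iff {f f1 f2 f3 : ℝ → ℂ} :
    DSBoundaryCond f f1 f2 f3 (𝓝[>] (-1)) ↔
      DSBoundaryCond (fun x => f (-x)) (fun x => -f1 (-x)) (fun x => f2 (-x)) (fun x => -f3 (-x))
        (𝓝[<] 1) := by
  refine and_congr (tendsto_nhdsGT_neg_one_zero_iff fun x => ?_)
    (tendsto_nhdsGT_neg_one_zero_iff fun x => ?_)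
  · rw [← norm_neg]
    congr 1
    simp only [bket1, sqTermD]
    push_cast
    ring
  · congr 1
    simp only [bketX, bket1, sqTermD]
    push_cast
    ring

theorem hasDerivAt_comp_neg {E : Type*} [NormedAddCommGroup E] [NormedSpace ℝ E] {g : ℝ → E}
    {g' : E} {x : ℝ} (h : HasDerivAt g g' (-x)) : HasDerivAt (fun y => g (-y)) (-g') x := by
  simpa [Function.comp_def] using h.scomp x (hasDerivAt_neg x)

end Reflection

section MaximalDomain

variable {g g' : ℝ → ℂ}

theorem LocACOn.eventuallyEq_primitive (hg : LocACOn g g') {x : ℝ} (hx : x ∈ Ioo (-1) 1) :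
    (fun y => g x + ∫ t in x..y, g' t) =ᶠ[𝓝 x] g := by
  filter_upwards [isOpen_Ioo.mem_nhds hx] with y hy
  rw [← (hg x hx y hy).2, add_sub_cancel]

theorem LocACOn.continuousOn (hg : LocACOn g g') : ContinuousOn g (Ioo (-1) 1) := by
  intro x hx
  have hab : (x - 1) / 2 ≤ (x + 1) / 2 := by linarith
  have ha : (x - 1) / 2 ∈ Ioo (-1 : ℝ) 1 := ⟨by linarith [hx.1], by linarith [hx.2]⟩
  have hb : (x + 1) / 2 ∈ Ioo (-1 : ℝ) 1 := ⟨by linarith [hx.1], by linarith [hx.2]⟩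
  have hnhds : uIcc ((x - 1) / 2) ((x + 1) / 2) ∈ 𝓝 x := by
    rw [uIcc_of_le hab]
    exact Icc_mem_nhds (by linarith [hx.1]) (by linarith [hx.2])
  have hprim := intervalIntegral.continuousOn_primitive_interval' (hg _ ha _ hb).1
    (mem_of_mem_nhds hnhds)
  exact ((continuousOn_const.add hprim).continuousAt hnhds).congr
    (hg.eventuallyEq_primitive hx) |>.continuousWithinAt

theorem LocACOn.hasDerivAt (hg : LocACOn g g') (hg' : ContinuousOn g' (Ioo (-1) 1)) {x : ℝ}
    (hx : x ∈ Ioo (-1) 1) : HasDerivAt g (g' x) x :=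
  ((intervalIntegral.integral_hasDerivAt_right (hg x hx x hx).1
    (hg'.stronglyMeasurableAtFilter isOpen_Ioo x hx)
    (hg'.continuousAt (isOpen_Ioo.mem_nhds hx))).const_add (g x)).congr_of_eventuallyEq
    (hg.eventuallyEq_primitive hx).symm

variable {f f1 f2 f3 f4 : ℝ → ℂ}

theorem Delta2Max.hasDerivAt (h : Delta2Max f f1 f2 f3 f4) {x : ℝ} (hx : x ∈ Ioo (-1) 1) :
    HasDerivAt f (f1 x) x ∧ HasDerivAt f1 (f2 x) x ∧ HasDerivAt f2 (f3 x) x := by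
  obtain ⟨hf, hf1, hf2, hf3, -⟩ := h
  exact ⟨hf.hasDerivAt hf1.continuousOn hx, hf1.hasDerivAt hf2.continuousOn hx,
    hf2.hasDerivAt hf3.continuousOn hx⟩

theorem Delta2Max.integrableOn_norm_sq (h : Delta2Max f f1 f2 f3 f4) :
    IntegrableOn (fun t => ‖f t‖ ^ 2) (Ioo (-1) 1) :=
  h.2.2.2.2.1.integrable_norm_pow two_ne_zero

theorem Delta2Max.dBoundaryCond_iff_dsBoundaryCond_atOne (h : Delta2Max f f1 f2 f3 f4) :
    DBoundaryCond f1 f2 f3 atOne ↔ DSBoundaryCond f f1 f2 f3 atOne := by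
  have hmem : ∀ t ∈ Ioo (0 : ℝ) 1, t ∈ Ioo (-1 : ℝ) 1 := fun t ht => ⟨by linarith [ht.1], ht.2⟩
  rw [atOne, nhdsWithin_Ioo_eq_nhdsLT (by norm_num)]
  exact dBoundaryCond_iff_dsBoundaryCond_nhdsLT_one (fun t ht => (h.hasDerivAt (hmem t ht)).1)
    (fun t ht => (h.hasDerivAt (hmem t ht)).2.1) (fun t ht => (h.hasDerivAt (hmem t ht)).2.2)
    (h.integrableOn_norm_sq.mono_set hmem)

theorem Delta2Max.dBoundaryCond_iff_dsBoundaryCond_atNegOne (h : Delta2Max f f1 f2 f3 f4) :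
    DBoundaryCond f1 f2 f3 atNegOne ↔ DSBoundaryCond f f1 f2 f3 atNegOne := by
  have hmem : ∀ t ∈ Ioo (0 : ℝ) 1, -t ∈ Ioo (-1 : ℝ) 1 :=
    fun t ht => ⟨by linarith [ht.2], by linarith [ht.1]⟩
  have hL2 : IntegrableOn (fun t => ‖f (-t)‖ ^ 2) (Ioo 0 1) :=
    ((Measure.measurePreserving_neg volume).integrableOn_comp_preimage
      (Homeomorph.neg ℝ).measurableEmbedding |>.2 h.integrableOn_norm_sq).mono_set hmem
  rw [atNegOne, nhdsWithin_Ioo_eq_nhdsGT (by norm_num), dBoundaryCond_nhdsGT_neg_one_iff,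
    dsBoundaryCond_nhdsGT_neg_one_iff]
  refine dBoundaryCond_iff_dsBoundaryCond_nhdsLT_one
    (fun t ht => hasDerivAt_comp_neg (h.hasDerivAt (hmem t ht)).1)
    (fun t ht => by simpa using hasDerivAt_comp_neg (h.hasDerivAt (hmem t ht)).2.1.neg)
    (fun t ht => hasDerivAt_comp_neg (h.hasDerivAt (hmem t ht)).2.2) hL2

end MaximalDomain

theorem D_eq_DS (f f1 f2 f3 f4 : ℝ → ℂ) :
    DDom f f1 f2 f3 f4 ↔ DS f f1 f2 f3 f4 := by
  constructor
  · rintro ⟨hΔ, hv₁, hv₂, hs₁, hs₂⟩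
    obtain ⟨hb₁, hX₁⟩ := hΔ.dBoundaryCond_iff_dsBoundaryCond_atOne.1 ⟨hv₁, hs₁⟩
    obtain ⟨hb₂, hX₂⟩ := hΔ.dBoundaryCond_iff_dsBoundaryCond_atNegOne.1 ⟨hv₂, hs₂⟩
    exact ⟨hΔ, hb₁, hb₂, hX₁, hX₂⟩
  · rintro ⟨hΔ, hb₁, hb₂, hX₁, hX₂⟩
    obtain ⟨hv₁, hs₁⟩ := hΔ.dBoundaryCond_iff_dsBoundaryCond_atOne.2 ⟨hb₁, hX₁⟩
    obtain ⟨hv₂, hs₂⟩ := hΔ.dBoundaryCond_iff_dsBoundaryCond_atNegOne.2 ⟨hb₂, hX₂⟩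
    exact ⟨hΔ, hv₁, hv₂, hs₁, hs₂⟩
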